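/- Let N be a natural number and p, λ, β, ω real numbers with 1 < p < N, λ > 0, β > 0, ω > 0. Let φ, g : ℝ → ℝ with φ continuously differentiable on [1,∞), φ(r) > 0 for all r ≥ 1, g continuous on [1,∞) with g(r) > 0 for all r ≥ 1, F satisfying the radial eigenvalue ODE on (1,∞), the Robin condition φ'(1) = β^(1/(p−1))·φ(1), and r_* > 1 with φ'(r_*) = 0. Assume moreover that r ↦ r^(N−1)·g(r)·φ(r)^p is Lebesgue integrable on (1,∞) and satisfies the normalization ω·∫_1^∞ r^(N−1)·g(r)·φ(r)^p dr = 1. Then β·ω·φ(1)^p < λ. -/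

import Mathlib

/-!
Integrating the ODE from `1` to the critical point `r_*` and using the Robin condition
gives `β φ(1)^(p-1) = λ ∫_1^{r_*} r^(N-1) g φ^(p-1)`. Since `F` is strictly decreasing and
vanishes at `r_*`, `φ' > 0` on `[1, r_*)`, so `φ(1) ≤ φ` on `[1, r_*]`. Hence
`β φ(1)^p ≤ λ ∫_1^{r_*} r^(N-1) g φ^p < λ ∫_1^∞ r^(N-1) g φ^p = λ / ω`.
-/

open Real Set MeasureTheory

/-- The radial quantity `F(r) = r^(N-1) |φ'(r)|^(p-2) φ'(r)`, written with
real exponents via the sign function. -/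
noncomputable def radialF (N : ℕ) (p : ℝ) (φ : ℝ → ℝ) (r : ℝ) : ℝ :=
  r ^ ((N : ℝ) - 1) * Real.sign (deriv φ r) * |deriv φ r| ^ (p - 1)

lemma continuous_sign_mul_abs_rpow {q : ℝ} (hq : 0 < q) :
    Continuous fun x : ℝ => Real.sign x * |x| ^ q := by
  have habs : Continuous fun x : ℝ => |x| ^ q :=
    continuous_abs.rpow_const fun _ => Or.inr hq.le
  have hif : Continuous fun x : ℝ => if x ≤ 0 then -|x| ^ q else |x| ^ q :=
    habs.neg.if_le habs continuous_id continuous_const fun x hx => by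
      simp [hx, zero_rpow hq.ne']
  refine hif.congr fun x => ?_
  rcases lt_trichotomy x 0 with hx | rfl | hx
  · simp [hx.le, sign_of_neg hx]
  · simp [zero_rpow hq.ne']
  · simp [hx.not_ge, sign_of_pos hx]

section RadialF

variable {N : ℕ} {p : ℝ} {φ : ℝ → ℝ} {r : ℝ}

lemma continuousOn_radialF {s : Set ℝ} (hp : 1 < p) (hs : (0 : ℝ) ∉ s)
    (hφ' : ContinuousOn (deriv φ) s) : ContinuousOn (radialF N p φ) s := by
  have hpow : ContinuousOn (fun r : ℝ => r ^ ((N : ℝ) - 1)) s :=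
    continuousOn_id.rpow_const fun r hr => Or.inl (ne_of_mem_of_not_mem hr hs)
  refine (hpow.mul ((continuous_sign_mul_abs_rpow (sub_pos.2 hp)).comp_continuousOn hφ')).congr
    fun r _ => ?_
  simp [radialF, mul_assoc]

lemma radialF_of_deriv_eq_zero (h : deriv φ r = 0) : radialF N p φ r = 0 := by
  simp [radialF, h]

lemma radialF_of_deriv_pos (h : 0 < deriv φ r) :
    radialF N p φ r = r ^ ((N : ℝ) - 1) * deriv φ r ^ (p - 1) := by
  rw [radialF, sign_of_pos h, abs_of_pos h, mul_one]

lemma deriv_pos_of_radialF_pos (hr : 0 ≤ r) (h : 0 < radialF N p φ r) : 0 < deriv φ r := by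
  by_contra! hd
  have hsign : Real.sign (deriv φ r) ≤ 0 := by
    rcases hd.lt_or_eq with hd | hd
    · simp [sign_of_neg hd]
    · simp [hd]
  have : radialF N p φ r ≤ 0 :=
    mul_nonpos_of_nonpos_of_nonneg (mul_nonpos_of_nonneg_of_nonpos (rpow_nonneg hr _) hsign)
      (rpow_nonneg (abs_nonneg _) _)
  linarith

lemma radialF_one_of_robin {β : ℝ} (hp : 1 < p) (hβ : 0 < β) (hφ : 0 < φ 1)
    (hRobin : deriv φ 1 = β ^ (1 / (p - 1)) * φ 1) :
    radialF N p φ 1 = β * φ 1 ^ (p - 1) := by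
  have hd : 0 < deriv φ 1 := hRobin ▸ mul_pos (rpow_pos_of_pos hβ _) hφ
  rw [radialF_of_deriv_pos hd, one_rpow, one_mul, hRobin, mul_rpow (rpow_nonneg hβ.le _) hφ.le,
    ← rpow_mul hβ.le, one_div_mul_cancel (sub_pos.2 hp).ne', rpow_one]

end RadialF

section RadialODE

variable {N : ℕ} {p lam a b : ℝ} {φ g : ℝ → ℝ}

lemma intervalIntegrable_radialWeight (ha : 0 < a) (hab : a ≤ b)
    (hg : ContinuousOn g (Icc a b)) (hφ : ContinuousOn φ (Icc a b))
    (hφpos : ∀ r ∈ Icc a b, 0 < φ r) (s : ℝ) :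
    IntervalIntegrable (fun r => r ^ ((N : ℝ) - 1) * g r * φ r ^ s) volume a b := by
  refine ContinuousOn.intervalIntegrable_of_Icc hab (ContinuousOn.mul (ContinuousOn.mul ?_ hg) ?_)
  · exact continuousOn_id.rpow_const fun r hr => Or.inl (ha.trans_le hr.1).ne'
  · exact hφ.rpow_const fun r hr => Or.inl (hφpos r hr).ne'

lemma radialF_sub_eq_integral (hab : a ≤ b) (hF : ContinuousOn (radialF N p φ) (Icc a b))
    (hODE : ∀ r ∈ Ioo a b, HasDerivAt (radialF N p φ)
      (-(lam * r ^ ((N : ℝ) - 1) * g r * φ r ^ (p - 1))) r)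
    (hA : IntervalIntegrable (fun r => r ^ ((N : ℝ) - 1) * g r * φ r ^ (p - 1)) volume a b) :
    radialF N p φ a - radialF N p φ b =
      lam * ∫ r in a..b, r ^ ((N : ℝ) - 1) * g r * φ r ^ (p - 1) := by
  have hA' : IntervalIntegrable
      (fun r => -(lam * r ^ ((N : ℝ) - 1) * g r * φ r ^ (p - 1))) volume a b := by
    simpa only [mul_assoc, Pi.neg_def] using (hA.const_mul lam).neg
  rw [← neg_sub, ← intervalIntegral.integral_eq_sub_of_hasDeriv_right_of_le hab hF
    (fun r hr => (hODE r hr).hasDerivWithinAt) hA', intervalIntegral.integral_neg, neg_neg,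
    ← intervalIntegral.integral_const_mul]
  simp only [mul_assoc]

lemma radialF_strictAntiOn (hlam : 0 < lam) (hF : ContinuousOn (radialF N p φ) (Icc a b))
    (hODE : ∀ r ∈ Ioo a b, HasDerivAt (radialF N p φ)
      (-(lam * r ^ ((N : ℝ) - 1) * g r * φ r ^ (p - 1))) r)
    (hpos : ∀ r ∈ Ioo a b, 0 < r ^ ((N : ℝ) - 1) * g r * φ r ^ (p - 1)) :
    StrictAntiOn (radialF N p φ) (Icc a b) := by
  refine strictAntiOn_of_deriv_neg (convex_Icc a b) hF fun r hr => ?_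
  rw [interior_Icc] at hr
  rw [(hODE r hr).deriv, mul_assoc, mul_assoc, neg_neg_iff_pos]
  exact mul_pos hlam (by simpa only [mul_assoc] using hpos r hr)

lemma monotoneOn_of_radialF_strictAntiOn (ha : 0 ≤ a)
    (hF : StrictAntiOn (radialF N p φ) (Icc a b)) (hFb : radialF N p φ b = 0)
    (hφ : ContinuousOn φ (Icc a b)) (hφd : ∀ r ∈ Ioo a b, DifferentiableAt ℝ φ r) :
    MonotoneOn φ (Icc a b) := by
  refine monotoneOn_of_deriv_nonneg (convex_Icc a b) hφ (fun r hr => ?_) fun r hr => ?_ <;>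
    rw [interior_Icc] at hr
  · exact (hφd r hr).differentiableWithinAt
  · have hFr : 0 < radialF N p φ r :=
      hFb ▸ hF ⟨hr.1.le, hr.2.le⟩ ⟨hr.1.le.trans hr.2.le, le_rfl⟩ hr.2
    exact (deriv_pos_of_radialF_pos (ha.trans hr.1.le) hFr).le

lemma mul_integral_radialWeight_le_of_monotoneOn (hab : a ≤ b) (hφ : MonotoneOn φ (Icc a b))
    (hφpos : ∀ r ∈ Icc a b, 0 < φ r)
    (hA0 : ∀ r ∈ Icc a b, 0 ≤ r ^ ((N : ℝ) - 1) * g r * φ r ^ (p - 1))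
    (hA : IntervalIntegrable (fun r => r ^ ((N : ℝ) - 1) * g r * φ r ^ (p - 1)) volume a b)
    (hB : IntervalIntegrable (fun r => r ^ ((N : ℝ) - 1) * g r * φ r ^ p) volume a b) :
    φ a * ∫ r in a..b, r ^ ((N : ℝ) - 1) * g r * φ r ^ (p - 1)
      ≤ ∫ r in a..b, r ^ ((N : ℝ) - 1) * g r * φ r ^ p := by
  rw [← intervalIntegral.integral_const_mul]
  refine intervalIntegral.integral_mono_on hab (hA.const_mul _) hB fun r hr => ?_
  have hφr : φ r ^ p = φ r ^ (p - 1) * φ r := by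
    rw [← rpow_add_one (hφpos r hr).ne', sub_add_cancel]
  calc φ a * (r ^ ((N : ℝ) - 1) * g r * φ r ^ (p - 1))
      ≤ φ r * (r ^ ((N : ℝ) - 1) * g r * φ r ^ (p - 1)) :=
        mul_le_mul_of_nonneg_right (hφ ⟨le_rfl, hab⟩ hr hr.1) (hA0 r hr)
    _ = r ^ ((N : ℝ) - 1) * g r * φ r ^ p := by
        rw [hφr]; ring

end RadialODE

lemma setIntegral_Ioc_lt_setIntegral_Ioi {f : ℝ → ℝ} {a b : ℝ} (hab : a ≤ b)
    (hf : IntegrableOn f (Ioi a)) (hpos : ∀ x ∈ Ioi b, 0 < f x) :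
    ∫ x in Ioc a b, f x < ∫ x in Ioi a, f x := by
  have htail : IntegrableOn f (Ioi b) := hf.mono_set (Ioi_subset_Ioi hab)
  rw [← Ioc_union_Ioi_eq_Ioi hab, setIntegral_union (Ioc_disjoint_Ioi le_rfl) measurableSet_Ioi
    (hf.mono_set Ioc_subset_Ioi_self) htail, lt_add_iff_pos_right,
    setIntegral_pos_iff_support_of_nonneg_ae
      ((ae_restrict_mem measurableSet_Ioi).mono fun x hx => (hpos x hx).le) htail]
  have : Function.support f ∩ Ioi b = Ioi b :=
    inter_eq_right.2 fun x hx => (hpos x hx).ne'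
  simp [this]

theorem boundary_value_upper_general (N : ℕ) (p lam β ω : ℝ)
    (hp : 1 < p) (hlam : 0 < lam) (hβ : 0 < β) (hω : 0 < ω)
    (φ g : ℝ → ℝ)
    (hφdiff : ∀ r ≥ (1 : ℝ), DifferentiableAt ℝ φ r)
    (hφC1 : ContinuousOn (deriv φ) (Set.Ici 1))
    (hφpos : ∀ r ≥ (1 : ℝ), 0 < φ r)
    (hgcont : ContinuousOn g (Set.Ici 1))
    (hgpos : ∀ r ≥ (1 : ℝ), 0 < g r)
    (hODE : ∀ r > (1 : ℝ),
      HasDerivAt (radialF N p φ) (-(lam * r ^ ((N : ℝ) - 1) * g r * φ r ^ (p - 1))) r)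
    (hRobin : deriv φ 1 = β ^ (1 / (p - 1)) * φ 1)
    (rstar : ℝ) (hrstar : 1 < rstar) (hcrit : deriv φ rstar = 0)
    (hInt : IntegrableOn (fun r : ℝ => r ^ ((N : ℝ) - 1) * g r * φ r ^ p) (Set.Ioi 1))
    (hNorm : ω * ∫ r in Set.Ioi (1 : ℝ), r ^ ((N : ℝ) - 1) * g r * φ r ^ p = 1) :
    β * ω * φ 1 ^ p < lam := by
  have hweight : ∀ r ≥ (1 : ℝ), ∀ s : ℝ, 0 < r ^ ((N : ℝ) - 1) * g r * φ r ^ s := by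
    intro r hr s
    have := one_pos.trans_le hr; have := hgpos r hr; have := hφpos r hr; positivity
  have hφ : ContinuousOn φ (Icc 1 rstar) :=
    fun r hr => (hφdiff r hr.1).continuousAt.continuousWithinAt
  have hF : ContinuousOn (radialF N p φ) (Icc 1 rstar) :=
    continuousOn_radialF hp (fun h => by linarith [h.1]) (hφC1.mono Icc_subset_Ici_self)
  have hODEIoo : ∀ r ∈ Ioo 1 rstar, HasDerivAt (radialF N p φ)
      (-(lam * r ^ ((N : ℝ) - 1) * g r * φ r ^ (p - 1))) r := fun r hr => hODE r hr.1
  have hweightInt := intervalIntegrable_radialWeight (N := N) one_pos hrstar.le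
    (hgcont.mono Icc_subset_Ici_self) hφ fun r hr => hφpos r hr.1
  have hmono : MonotoneOn φ (Icc 1 rstar) :=
    monotoneOn_of_radialF_strictAntiOn zero_le_one
      (radialF_strictAntiOn hlam hF hODEIoo fun r hr => hweight r hr.1.le _)
      (radialF_of_deriv_eq_zero hcrit) hφ fun r hr => hφdiff r hr.1.le
  have hFTC := radialF_sub_eq_integral hrstar.le hF hODEIoo (hweightInt (p - 1))
  rw [radialF_one_of_robin hp hβ (hφpos 1 le_rfl) hRobin, radialF_of_deriv_eq_zero hcrit,
    sub_zero] at hFTC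
  have hcomp := mul_integral_radialWeight_le_of_monotoneOn hrstar.le hmono
    (fun r hr => hφpos r hr.1) (fun r hr => (hweight r hr.1 _).le) (hweightInt _) (hweightInt p)
  have htail := setIntegral_Ioc_lt_setIntegral_Ioi hrstar.le hInt
    fun r hr => hweight r (hrstar.le.trans hr.le) p
  rw [← intervalIntegral.integral_of_le hrstar.le] at htail
  have hφ1 : φ 1 ^ p = φ 1 * φ 1 ^ (p - 1) := by
    rw [mul_comm, ← rpow_add_one (hφpos 1 le_rfl).ne', sub_add_cancel]
  calc β * ω * φ 1 ^ p
      = ω * lam * (φ 1 * ∫ r in (1 : ℝ)..rstar, r ^ ((N : ℝ) - 1) * g r * φ r ^ (p - 1)) :=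
        by
        rw [hφ1]; linear_combination ω * φ 1 * hFTC
    _ < ω * lam * ∫ r in Ioi (1 : ℝ), r ^ ((N : ℝ) - 1) * g r * φ r ^ p := by
        gcongr; exact hcomp.trans_lt htail
    _ = lam := by rw [mul_right_comm, hNorm, one_mul]

/-- Upper bound on the boundary value `φ(1)` in Theorem 1.4(a):
`β ω φ(1)^p < λ` under the normalization `ω ∫_1^∞ r^(N-1) g φ^p = 1`. -/
theorem boundary_value_upper (N : ℕ) (p lam β ω : ℝ)
    (hp : 1 < p) (hpN : p < N) (hlam : 0 < lam) (hβ : 0 < β) (hω : 0 < ω)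
    (φ g : ℝ → ℝ)
    (hφdiff : ∀ r ≥ (1 : ℝ), DifferentiableAt ℝ φ r)
    (hφC1 : ContinuousOn (deriv φ) (Set.Ici 1))
    (hφpos : ∀ r ≥ (1 : ℝ), 0 < φ r)
    (hgcont : ContinuousOn g (Set.Ici 1))
    (hgpos : ∀ r ≥ (1 : ℝ), 0 < g r)
    (hODE : ∀ r > (1 : ℝ),
      HasDerivAt (radialF N p φ) (-(lam * r ^ ((N : ℝ) - 1) * g r * φ r ^ (p - 1))) r)
    (hRobin : deriv φ 1 = β ^ (1 / (p - 1)) * φ 1)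
    (rstar : ℝ) (hrstar : 1 < rstar) (hcrit : deriv φ rstar = 0)
    (hInt : IntegrableOn (fun r : ℝ => r ^ ((N : ℝ) - 1) * g r * φ r ^ p) (Set.Ioi 1))
    (hNorm : ω * ∫ r in Set.Ioi (1 : ℝ), r ^ ((N : ℝ) - 1) * g r * φ r ^ p = 1) :
    β * ω * φ 1 ^ p < lam :=
  boundary_value_upper_general N p lam β ω hp hlam hβ hω φ g hφdiff hφC1 hφpos hgcont hgpos hODE
    hRobin rstar hrstar hcrit hInt hNorm
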